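/- Divisibility of the renormalized theta value: for every admissible triple (a,b,c) of half-integers, the Laurent polynomial [a+b+c+1] · [a+b+c; a+b−c, b+c−a, c+a−b] is divisible by [2a+1] in ℤ[q, q^{−1}] (and likewise by [2b+1] and by [2c+1]). -/

import Mathlib

noncomputable section
open scoped Classical

namespace QSpin

/-- The ambient field: rational functions over `ℂ` (which contains `ℚ(i)`),
in a variable `X` which represents the formal fourth root `q^(1/4)`. -/
abbrev K : Type := RatFunc ℂ

/-- `X` represents `q^(1/4)`. -/
def X : K := RatFunc.X

/-- The quantum variable `q = X^4`. -/
def q : K := X ^ 4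

/-- `i = √-1`, as a constant of `K`. -/
def ii : K := RatFunc.C Complex.I

/-- `q` raised to a rational power `r` (meaningful whenever `4 * r ∈ ℤ`). -/
def qpow (r : ℚ) : K := X ^ (4 * r).num

/-- Half of an integer, as a rational number: a half-integer is encoded by its double. -/
def hf (n : ℤ) : ℚ := (n : ℚ) / 2

/-- Integer powers of `i`. -/
def ipow (n : ℤ) : K := ii ^ n

/-- Integer powers of `-1`. -/
def m1pow (n : ℤ) : K := (-1 : K) ^ n

/-- The quantum integer `[n] = (q^n - q^(-n))/(q - q⁻¹)`. -/
def qint (n : ℤ) : K := (q ^ n - q ^ (-n)) / (q - q⁻¹)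

/-- The quantum factorial `[n]!`. -/
def qfact (n : ℕ) : K := ∏ j ∈ Finset.range n, qint (j + 1)

/-- The quantum factorial of an integer (zero for negative arguments). -/
def qfactz (n : ℤ) : K := if 0 ≤ n then qfact n.toNat else 0

/-- The quantum binomial `[n choose k]`, vanishing unless `0 ≤ k ≤ n`. -/
def qbin (n k : ℤ) : K :=
  if 0 ≤ k ∧ k ≤ n then qfactz n / (qfactz k * qfactz (n - k)) else 0

/-- Admissibility of a triple of half-integers (encoded by their doubles):
all nonnegative, total sum an integer (i.e. the sum of the doubles is even), and
the triangular inequalities hold. -/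
def Adm (a b c : ℤ) : Prop :=
  0 ≤ a ∧ 0 ≤ b ∧ 0 ≤ c ∧ 2 ∣ (a + b + c) ∧ c ≤ a + b ∧ a ≤ b + c ∧ b ≤ c + a

/-- The quantum Clebsch-Gordan coefficient `C^{a,b,c}_{u,v,t}`; all six half-integer
parameters are encoded by their doubles. -/
def CG (a b c u v t : ℤ) : K :=
  if u + v = t then
    ipow ((c - a - b) / 2) * m1pow ((b - v) / 2 - (c - t) / 2) *
      qpow ((hf b - hf v) * (hf b + hf v + 1) / 2 - (hf a - hf u) * (hf a + hf u + 1) / 2) *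
      (qfactz ((a + b - c) / 2) * qfactz ((b + c - a) / 2) * qfactz ((c + a - b) / 2) /
        qfactz c) *
      ∑ z ∈ Finset.range (((c - t) / 2).toNat + 1),
        m1pow z *
          qpow (((z : ℚ) - (((c - t) / 2 - (z : ℤ) : ℤ) : ℚ)) * (hf c + hf t + 1) / 2) *
          qbin ((a + u) / 2 + z) ((a + c - b) / 2) *
          qbin ((b + v) / 2 + ((c - t) / 2 - (z : ℤ))) ((b + c - a) / 2) *
          qbin ((c - t) / 2) z
  else 0

/-- The coefficient `W^{a,b,c}_{u,v,t} = C^{a,b,c}_{u,v,-t} · i^{-2t} q^{-t} · [2c]!`. -/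
def W (a b c u v t : ℤ) : K := CG a b c u v (-t) * ipow (-t) * qpow (-(hf t)) * qfactz c

/-- The coefficient `P^{a,b,c}_{u,v,t} = C^{a,c,b}_{-u,t,v} · i^{2u} q^{u} / [2a]!`. -/
def Pc (a b c u v t : ℤ) : K := CG a c b (-u) t v * ipow u * qpow (hf u) / qfactz a

/-- The coefficient `M^{a,b,c}_{u,v,t} = P^{a,b,c}_{u,v,-t} · i^{-2t} q^{-t} / [2c]!`. -/
def M (a b c u v t : ℤ) : K := Pc a b c u v (-t) * ipow (-t) * qpow (-(hf t)) / qfactz c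


/-- The renormalized unknot value `O(a) = (−1)^{2a}[2a+1]`
(the half-integer `a` is encoded by its double). -/
def O (a : ℤ) : K := m1pow a * qint (a + 1)

/-- The renormalized theta value
`Θ(a,b,c) = (−1)^{a+b+c}[a+b+c+1]·[a+b+c; a+b−c, b+c−a, c+a−b]`
(half-integers encoded by their doubles). -/
def Th (a b c : ℤ) : K :=
  m1pow ((a + b + c) / 2) * qint ((a + b + c) / 2 + 1) *
    (qfactz ((a + b + c) / 2) /
      (qfactz ((a + b - c) / 2) * qfactz ((b + c - a) / 2) * qfactz ((c + a - b) / 2)))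

/-- The renormalized 6j-symbol (tetrahedron)
`Tet(a,b,c,d,e,f) = Σ_{z=max Tᵢ}^{min Qⱼ} (−1)^z [z+1] ·
[z; z−T₁, z−T₂, z−T₃, z−T₄, Q₁−z, Q₂−z, Q₃−z]`
(half-integers encoded by their doubles). -/
def Tet (a b c d e f : ℤ) : K :=
  (let T1 := (a + b + c) / 2; let T2 := (a + e + f) / 2;
   let T3 := (d + b + f) / 2; let T4 := (d + e + c) / 2;
   let Q1 := (a + b + d + e) / 2; let Q2 := (a + c + d + f) / 2;
   let Q3 := (b + c + e + f) / 2;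
   ∑ z ∈ Finset.Icc (max (max T1 T2) (max T3 T4)) (min (min Q1 Q2) Q3),
     m1pow z * qint (z + 1) *
       (qfactz z /
         (qfactz (z - T1) * qfactz (z - T2) * qfactz (z - T3) * qfactz (z - T4) *
           qfactz (Q1 - z) * qfactz (Q2 - z) * qfactz (Q3 - z))))

/-- The renormalized theta value without its sign,
`[a+b+c+1] · [a+b+c; a+b−c, b+c−a, c+a−b]` (half-integers encoded by doubles). -/
def thetaMultinomial (a b c : ℤ) : K :=
  qint ((a + b + c) / 2 + 1) *
    (qfactz ((a + b + c) / 2) /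
      (qfactz ((a + b - c) / 2) * qfactz ((b + c - a) / 2) * qfactz ((c + a - b) / 2)))

/-!
Write the admissible triple as `a = x + z`, `b = x + y`, `c = y + z` with `x, y, z ∈ ℕ`
(in the doubled encoding). Then `[a+b+c+1]·[a+b+c; x, y, z] = [x+y+z+1]! / ([x]! [y]! [z]!)`
factors as `[2a+1] · [x+y+z+1; y, x+z+1] · [x+z; x, z]`, and quantum binomials are Laurent
polynomials in `q` by the `q`-Pascal rule. The theta value is symmetric in `a, b, c`, which
gives the other two divisibilities.
-/

theorem X_pow_ne_one {k : ℕ} (hk : k ≠ 0) : (X : K) ^ k ≠ 1 := by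
  intro h
  have hpoly : (Polynomial.X ^ k : Polynomial ℂ) = 1 :=
    RatFunc.algebraMap_injective ℂ (by simpa [X, RatFunc.algebraMap_X] using h)
  simpa [hk] using congrArg Polynomial.natDegree hpoly

theorem q_ne_zero : q ≠ 0 := pow_ne_zero _ RatFunc.X_ne_zero

theorem q_zpow_ne_one {n : ℤ} (hn : n ≠ 0) : q ^ n ≠ 1 := by
  intro h
  have hX : (X : K) ^ (4 * n) = 1 := by rw [← h, q, ← zpow_natCast, ← zpow_mul]; norm_num
  rcases Int.natAbs_eq (4 * n) with e | e
  · exact X_pow_ne_one (k := (4 * n).natAbs) (by omega) (by rwa [e, zpow_natCast] at hX)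
  · exact X_pow_ne_one (k := (4 * n).natAbs) (by omega)
      (by rwa [e, zpow_neg, inv_eq_one, zpow_natCast] at hX)

theorem q_zpow_sub_ne_zero {n : ℤ} (hn : n ≠ 0) : q ^ n - q ^ (-n) ≠ 0 := fun h => by
  apply q_zpow_ne_one (show n + n ≠ 0 by omega)
  rw [zpow_add₀ q_ne_zero]
  nth_rw 2 [sub_eq_zero.mp h]
  rw [← zpow_add₀ q_ne_zero, add_neg_cancel, zpow_zero]

theorem q_sub_inv_ne_zero : q - q⁻¹ ≠ 0 := by
  simpa using q_zpow_sub_ne_zero one_ne_zero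

theorem qint_ne_zero {n : ℤ} (hn : n ≠ 0) : qint n ≠ 0 :=
  div_ne_zero (q_zpow_sub_ne_zero hn) q_sub_inv_ne_zero

theorem qint_add (m n : ℤ) : qint (m + n) = q ^ m * qint n + q ^ (-n) * qint m := by
  simp only [qint, neg_add, zpow_add₀ q_ne_zero]
  ring

theorem qfact_zero : qfact 0 = 1 := Finset.prod_range_zero _

theorem qfact_succ (n : ℕ) : qfact (n + 1) = qint ((n : ℤ) + 1) * qfact n := by
  rw [qfact, Finset.prod_range_succ, mul_comm, qfact]

theorem qfact_ne_zero (n : ℕ) : qfact n ≠ 0 :=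
  Finset.prod_ne_zero_iff.2 fun _ _ => qint_ne_zero (by omega)

theorem qfactz_natCast (n : ℕ) : qfactz n = qfact n := by
  simp [qfactz]

def laurent : Subring K := Subring.closure {q, q⁻¹}

theorem q_zpow_mem_laurent (n : ℤ) : q ^ n ∈ laurent := by
  have hq : q ∈ laurent := Subring.subset_closure (by simp)
  have hq' : q⁻¹ ∈ laurent := Subring.subset_closure (by simp)
  rcases Int.eq_nat_or_neg n with ⟨k, rfl | rfl⟩
  · simpa using pow_mem hq k
  · simpa using pow_mem hq' k

def qbinom (k l : ℕ) : K := qfact (k + l) / (qfact k * qfact l)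

theorem qbinom_zero_left (l : ℕ) : qbinom 0 l = 1 := by
  rw [qbinom, zero_add, qfact_zero, one_mul, div_self (qfact_ne_zero l)]

theorem qbinom_zero_right (k : ℕ) : qbinom k 0 = 1 := by
  rw [qbinom, add_zero, qfact_zero, mul_one, div_self (qfact_ne_zero k)]

theorem qbinom_succ_succ (k l : ℕ) :
    qbinom (k + 1) (l + 1) =
      q ^ ((k : ℤ) + 1) * qbinom (k + 1) l + q ^ (-((l : ℤ) + 1)) * qbinom k (l + 1) := by
  have hsum : qint ((k + l + 1 : ℕ) + 1) =
      q ^ ((k : ℤ) + 1) * qint ((l : ℤ) + 1) + q ^ (-((l : ℤ) + 1)) * qint ((k : ℤ) + 1) := by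
    rw [← qint_add]; push_cast; ring_nf
  have hk := qint_ne_zero (n := (k : ℤ) + 1) (by omega)
  have hl := qint_ne_zero (n := (l : ℤ) + 1) (by omega)
  have := qfact_ne_zero k
  have := qfact_ne_zero l
  rw [qbinom, qbinom, qbinom, show k + 1 + (l + 1) = k + l + 1 + 1 by omega,
    show k + 1 + l = k + l + 1 by omega, show k + (l + 1) = k + l + 1 by omega,
    qfact_succ (k + l + 1), qfact_succ k, qfact_succ l, hsum]
  field_simp

theorem qbinom_mem_laurent (k l : ℕ) : qbinom k l ∈ laurent := by
  induction k generalizing l with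
  | zero => rw [qbinom_zero_left]; exact one_mem _
  | succ k ihk =>
    induction l with
    | zero => rw [qbinom_zero_right]; exact one_mem _
    | succ l ihl =>
      rw [qbinom_succ_succ]
      exact add_mem (mul_mem (q_zpow_mem_laurent _) ihl) (mul_mem (q_zpow_mem_laurent _) (ihk _))

/-- Both sides equal `[x+y+z+1]! / ([x]! [y]! [z]!)`. -/
theorem qint_mul_qmultinomial (x y z : ℕ) :
    qint ((x : ℤ) + y + z + 1) * (qfact (x + y + z) / (qfact x * qfact y * qfact z)) =
      qint ((x : ℤ) + z + 1) * (qbinom y (x + z + 1) * qbinom x z) := by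
  have := qfact_ne_zero x
  have := qfact_ne_zero y
  have := qfact_ne_zero z
  have := qfact_ne_zero (x + z)
  have := qint_ne_zero (n := (x : ℤ) + z + 1) (by omega)
  rw [qbinom, qbinom, show y + (x + z + 1) = x + y + z + 1 by omega, qfact_succ (x + y + z),
    qfact_succ (x + z)]
  push_cast
  field_simp

theorem thetaMultinomial_swap (a b c : ℤ) : thetaMultinomial b a c = thetaMultinomial a b c := by
  rw [thetaMultinomial, thetaMultinomial, add_comm b a, show b + c - a = c + b - a by ring,
    show c + a - b = a + c - b by ring]
  ring

theorem thetaMultinomial_rotate (a b c : ℤ) :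
    thetaMultinomial b c a = thetaMultinomial a b c := by
  rw [thetaMultinomial, thetaMultinomial, show b + c + a = a + b + c by ring]
  ring

theorem thetaMultinomial_natCast (x y z : ℕ) :
    thetaMultinomial ((x : ℤ) + z) (x + y) (y + z) =
      qint ((x : ℤ) + y + z + 1) * (qfact (x + y + z) / (qfact x * qfact y * qfact z)) := by
  have hxyz : ((x : ℤ) + z + (x + y) + (y + z)) / 2 = ((x + y + z : ℕ) : ℤ) := by omega
  rw [thetaMultinomial, hxyz, show ((x : ℤ) + z + (x + y) - (y + z)) / 2 = x by omega,
    show ((x : ℤ) + y + (y + z) - (x + z)) / 2 = y by omega,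
    show ((y : ℤ) + z + (x + z) - (x + y)) / 2 = z by omega]
  simp only [qfactz_natCast]
  push_cast
  rfl

namespace Adm

theorem swap {a b c : ℤ} (h : Adm a b c) : Adm b a c := by
  unfold Adm at *; omega

theorem rotate {a b c : ℤ} (h : Adm a b c) : Adm b c a := by
  unfold Adm at *; omega

theorem exists_natCast {a b c : ℤ} (h : Adm a b c) :
    ∃ x y z : ℕ, a = x + z ∧ b = x + y ∧ c = y + z := by
  obtain ⟨ha, hb, hc, ⟨k, hk⟩, hab, hbc, hca⟩ := h
  refine ⟨(k - c).toNat, (k - a).toNat, (k - b).toNat, ?_, ?_, ?_⟩ <;> omega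

theorem exists_thetaMultinomial_eq_qint_mul {a b c : ℤ} (h : Adm a b c) :
    ∃ P ∈ laurent, thetaMultinomial a b c = qint (a + 1) * P := by
  obtain ⟨x, y, z, rfl, rfl, rfl⟩ := h.exists_natCast
  exact ⟨qbinom y (x + z + 1) * qbinom x z,
    mul_mem (qbinom_mem_laurent _ _) (qbinom_mem_laurent _ _),
    (thetaMultinomial_natCast x y z).trans (qint_mul_qmultinomial x y z)⟩

end Adm

/-- Divisibility of the renormalized theta value: for every
admissible triple `(a,b,c)` of half-integers (encoded by doubles), the Laurent
polynomial `[a+b+c+1] · [a+b+c; a+b−c, b+c−a, c+a−b]` is divisible by `[2a+1]`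
in `ℤ[q, q⁻¹]`, and likewise by `[2b+1]` and by `[2c+1]`. -/
theorem theta_divisibility (a b c : ℤ) (h : Adm a b c) :
    (∃ P ∈ Subring.closure ({q, q⁻¹} : Set K),
        thetaMultinomial a b c = qint (a + 1) * P)
    ∧ (∃ P ∈ Subring.closure ({q, q⁻¹} : Set K),
        thetaMultinomial a b c = qint (b + 1) * P)
    ∧ (∃ P ∈ Subring.closure ({q, q⁻¹} : Set K),
        thetaMultinomial a b c = qint (c + 1) * P) := by
  refine ⟨h.exists_thetaMultinomial_eq_qint_mul, ?_, ?_⟩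
  · rw [← thetaMultinomial_swap]
    exact h.swap.exists_thetaMultinomial_eq_qint_mul
  · rw [← thetaMultinomial_rotate, ← thetaMultinomial_rotate]
    exact h.rotate.rotate.exists_thetaMultinomial_eq_qint_mul

end QSpin
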